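/- arXiv:2006.03225 — 4 statements merged into one kernel-verified Lean document; each statement's English description precedes it below -/
import Mathlib

section
/- Let ε ∈ (0,3) be a constant. There exist constants c > 0 and d₀ such that for all d > d₀, every n-vertex graph with maximum degree at most d containing at most n·d^{2-ε} triangles has an independent set of size at least c·(n/d)·log d. -/
/-!
Put `δ = min ε 2`, `D = d ^ (δ / 2)` and keep every vertex independently with probability
`p = D / (4 d)`. The sample `S` has on average `p n` vertices, at most `p³ n d ^ (2 - δ) = p n / 16`
triangles and at most `p² n d` ordered edges. Deleting one vertex of each triangle of `S`, and then
every vertex with more than `D` neighbours in what is left, costs on average at most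
`p n / 16 + p n / 4`, so some outcome is a triangle-free set `A` with `|A| ≥ p n / 2` in which all
degrees are at most `D`.

On such an `A` Shearer's bound holds in Alon's averaging form: for a uniformly random independent
set `W ⊆ A` and `v ∈ A`, the quantity `D [v ∈ W] + |N(v) ∩ W|` has mean at least `log D / 8`
(condition on `U = W \ N[v]`; since `N(v) ∩ A` is independent, the possible completions of `U`
are `{v}` and all sets of neighbours of `v` in `A` with no neighbour in `U`), while its sum over
`v ∈ A` is at most `2 D |W|`. Hence some `W` has `|W| ≥ |A| log D / (16 D) ≥ δ n log d / (256 d)`.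
-/

open Finset

attribute [local instance] Classical.propDecidable

lemma two_pow_add_one_mul_log_le {D : ℝ} (hD : 1 ≤ D) (t : ℕ) :
    (2 ^ t + 1) * (Real.log D / 8) ≤ D + t * 2 ^ t / 2 := by
  have hx : 0 ≤ Real.log D := Real.log_nonneg hD
  set y := Real.log D - t * Real.log 2
  have hy : y / 4 ≤ Real.exp y := by
    rcases le_or_gt 0 y with h | h
    · linarith [Real.add_one_le_exp y]
    · linarith [Real.exp_pos y]
  -- `y / 4 ≤ exp y` at `y = log (D / 2 ^ t) ≥ log D - 2 t` gives `2 ^ t (log D - 2 t) / 4 ≤ D`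
  have hexp : Real.exp y * 2 ^ t = D := by
    rw [Real.exp_sub, Real.exp_nat_mul, Real.exp_log (by linarith), Real.exp_log two_pos]
    field_simp
  have hlog2 : t * Real.log 2 ≤ 2 * t := by
    nlinarith [Real.log_two_lt_d9, (Nat.cast_nonneg t : (0 : ℝ) ≤ t)]
  have h2t : (1 : ℝ) ≤ 2 ^ t := one_le_pow₀ one_le_two
  have key : 2 ^ t * ((Real.log D - 2 * t) / 4) ≤ 2 ^ t * Real.exp y :=
    mul_le_mul_of_nonneg_left (by linarith) (by positivity)
  nlinarith [mul_le_mul_of_nonneg_right h2t hx]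

lemma two_mul_sum_card_powerset {α : Type*} (s : Finset α) :
    2 * ∑ t ∈ s.powerset, #t = #s * 2 ^ #s := by
  rw [sum_powerset_apply_card (fun m => m)]
  simp only [smul_eq_mul, mul_comm ((#s).choose _)]
  rw [Nat.sum_range_mul_choose]
  cases #s with
  | zero => rfl
  | succ k => rw [Nat.add_sub_cancel, pow_succ]; ring

lemma exists_sum_mul_le {ι : Type*} [Fintype ι] [Nonempty ι] {w : ι → ℝ} (hw : ∀ i, 0 ≤ w i)
    (hw1 : ∑ i, w i = 1) (f : ι → ℝ) : ∃ i, ∑ j, w j * f j ≤ f i := by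
  obtain ⟨i, -, hi⟩ := exists_max_image univ f univ_nonempty
  refine ⟨i, ?_⟩
  calc ∑ j, w j * f j ≤ ∑ j, w j * f i :=
        sum_le_sum fun j hj => mul_le_mul_of_nonneg_left (hi j hj) (hw j)
    _ = f i := by rw [← sum_mul, hw1, one_mul]

section BinomialWeight

variable {V : Type*} [Fintype V]

noncomputable def binomialWeight (p : ℝ) (S : Finset V) : ℝ := p ^ #S * (1 - p) ^ #Sᶜ

lemma binomialWeight_nonneg {p : ℝ} (hp0 : 0 ≤ p) (hp1 : p ≤ 1) (S : Finset V) :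
    0 ≤ binomialWeight p S := by
  have : 0 ≤ 1 - p := by linarith
  unfold binomialWeight
  positivity

lemma sum_ite_subset_binomialWeight (p : ℝ) (A : Finset V) :
    ∑ S, (if A ⊆ S then binomialWeight p S else 0) = p ^ #A := by
  calc ∑ S, (if A ⊆ S then binomialWeight p S else 0)
      = ∑ S ∈ univ.powerset, (∏ _x ∈ S, p) * ∏ x ∈ univ \ S, (if x ∉ A then 1 - p else 0) := by
        rw [powerset_univ]
        refine sum_congr rfl fun S _ => ?_
        have hsub : (∀ x ∈ Sᶜ, x ∉ A) ↔ A ⊆ S := by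
          simp only [mem_compl]
          exact ⟨fun h x hx => by_contra fun hn => h x hn hx, fun h x hx hxA => hx (h hxA)⟩
        rw [prod_ite_zero, prod_const, prod_const, ← compl_eq_univ_sdiff]
        simp only [hsub, binomialWeight, mul_ite, mul_zero]
    _ = ∏ x, (p + if x ∉ A then 1 - p else 0) := (prod_add _ _ _).symm
    _ = ∏ x, (if x ∈ A then p else 1) := prod_congr rfl fun x _ => by split_ifs <;> ring
    _ = p ^ #A := by rw [Fintype.prod_ite_mem, prod_const]

lemma sum_binomialWeight (p : ℝ) : ∑ S : Finset V, binomialWeight p S = 1 := by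
  simpa using sum_ite_subset_binomialWeight (V := V) p ∅

lemma sum_binomialWeight_mul_card_filter {ι : Type*} (p : ℝ) (T : Finset ι) (f : ι → Finset V) :
    ∑ S, binomialWeight p S * #{i ∈ T | f i ⊆ S} = ∑ i ∈ T, p ^ #(f i) := by
  simp only [card_filter, Nat.cast_sum, Nat.cast_ite, Nat.cast_one, Nat.cast_zero, mul_sum,
    mul_ite, mul_one, mul_zero]
  rw [sum_comm]
  exact sum_congr rfl fun i _ => sum_ite_subset_binomialWeight p (f i)

end BinomialWeight

namespace SimpleGraph

variable {V : Type*} (G : SimpleGraph V)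

noncomputable def indepSubsets (A : Finset V) : Finset (Finset V) :=
  {W ∈ A.powerset | G.IsIndepSet W}

variable {G} in
lemma mem_indepSubsets {A W : Finset V} : W ∈ G.indepSubsets A ↔ W ⊆ A ∧ G.IsIndepSet W := by
  simp [indepSubsets]

variable [Fintype V]

noncomputable def shearerWeight (D : ℝ) (v : V) (W : Finset V) : ℝ :=
  (if v ∈ W then D else 0) + #(G.neighborFinset v ∩ W)

lemma sum_card_neighborFinset_inter_comm (A B : Finset V) :
    ∑ v ∈ A, #(G.neighborFinset v ∩ B) = ∑ u ∈ B, #(G.neighborFinset u ∩ A) := by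
  have key (v : V) (B : Finset V) :
      #(G.neighborFinset v ∩ B) = ∑ u ∈ B, if G.Adj v u then 1 else 0 := by
    rw [inter_comm, ← filter_mem_eq_inter, card_filter]
    simp [mem_neighborFinset]
  simp only [key]
  rw [sum_comm]
  simp [adj_comm]

lemma sum_shearerWeight_le {A W : Finset V} {D : ℝ} (hWA : W ⊆ A)
    (hdeg : ∀ v ∈ A, #(G.neighborFinset v ∩ A) ≤ D) :
    ∑ v ∈ A, G.shearerWeight D v W ≤ 2 * D * #W := by
  have hmem : ∑ v ∈ A, (if v ∈ W then D else 0) = D * #W := by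
    rw [sum_ite_mem, inter_eq_right.mpr hWA, sum_const, nsmul_eq_mul, mul_comm]
  have hnbr : ∑ v ∈ A, (#(G.neighborFinset v ∩ W) : ℝ) ≤ D * #W := by
    rw [← Nat.cast_sum, sum_card_neighborFinset_inter_comm, Nat.cast_sum]
    calc _ ≤ ∑ _u ∈ W, D := sum_le_sum fun u hu => hdeg u (hWA hu)
      _ = D * #W := by rw [sum_const, nsmul_eq_mul, mul_comm]
  simp only [shearerWeight, sum_add_distrib]
  linarith

lemma shearerWeight_union_of_disjoint {D : ℝ} {v : V} {S : Finset V}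
    (hS : Disjoint S (insert v (G.neighborFinset v))) (X : Finset V) :
    G.shearerWeight D v (S ∪ X) = G.shearerWeight D v X := by
  rw [disjoint_insert_right] at hS
  have hN : G.neighborFinset v ∩ (S ∪ X) = G.neighborFinset v ∩ X := by
    rw [inter_union_distrib_left, disjoint_iff_inter_eq_empty.mp hS.2.symm, empty_union]
  simp [shearerWeight, hN, hS.1]

lemma le_sum_shearerWeight {D : ℝ} (hD : 1 ≤ D) {v : V} {F : Finset V}
    (hF : F ⊆ G.neighborFinset v) :
    #(insert {v} F.powerset) * (Real.log D / 8) ≤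
      ∑ X ∈ insert {v} F.powerset, G.shearerWeight D v X := by
  have hvF : {v} ∉ F.powerset := fun h =>
    G.notMem_neighborFinset_self v (hF (mem_powerset.mp h (mem_singleton_self v)))
  have hsingle : G.shearerWeight D v {v} = D := by
    simp [shearerWeight]
  have hsub : ∀ J ∈ F.powerset, G.shearerWeight D v J = #J := by
    intro J hJ
    have hJ' := (mem_powerset.mp hJ).trans hF
    have hvJ : v ∉ J := fun h => G.notMem_neighborFinset_self v (hJ' h)
    simp [shearerWeight, hvJ, inter_eq_right.mpr hJ']
  have hsum : (2 : ℝ) * ∑ J ∈ F.powerset, (#J : ℝ) = #F * 2 ^ #F := by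
    exact_mod_cast two_mul_sum_card_powerset F
  rw [sum_insert hvF, hsingle, sum_congr rfl hsub, card_insert_of_notMem hvF, card_powerset]
  push_cast
  linarith [two_pow_add_one_mul_log_le hD #F]

noncomputable def freeNeighbors (A : Finset V) (v : V) (S : Finset V) : Finset V :=
  {u ∈ G.neighborFinset v ∩ A | ∀ s ∈ S, ¬ G.Adj u s}

noncomputable def extensions (A : Finset V) (v : V) (S : Finset V) : Finset (Finset V) :=
  insert {v} (G.freeNeighbors A v S).powerset

section

variable {G} {A : Finset V} {v : V}

lemma isIndepSet_neighborFinset_inter (htf : ∀ t ⊆ A, ¬ G.IsNClique 3 t) (hv : v ∈ A) :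
    G.IsIndepSet (G.neighborFinset v ∩ A : Finset V) := by
  intro u hu x hx _ hadj
  simp only [coe_inter, Set.mem_inter_iff, mem_coe, mem_neighborFinset] at hu hx
  refine htf {v, u, x} ?_ (is3Clique_triple_iff.mpr ⟨hu.1, hx.1, hadj⟩)
  simp [insert_subset_iff, hv, hu.2, hx.2]

lemma subset_of_mem_extensions {S X : Finset V} (hX : X ∈ G.extensions A v S) :
    X ⊆ insert v (G.neighborFinset v) := by
  rcases mem_insert.mp hX with rfl | hX
  · simp
  · exact (mem_powerset.mp hX).trans <| (filter_subset _ _).trans <|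
      inter_subset_left.trans (subset_insert _ _)

lemma inter_mem_extensions {W : Finset V} (hW : W ∈ G.indepSubsets A) :
    W ∩ insert v (G.neighborFinset v) ∈ G.extensions A v (W \ insert v (G.neighborFinset v)) := by
  obtain ⟨hWA, hWind⟩ := mem_indepSubsets.mp hW
  by_cases hvW : v ∈ W
  · refine mem_insert.mpr (Or.inl (ext fun x => ?_))
    simp only [mem_inter, mem_insert, mem_neighborFinset, mem_singleton]
    refine ⟨fun ⟨hxW, hx⟩ => hx.resolve_right fun hadj => ?_, fun hx => ⟨hx ▸ hvW, Or.inl hx⟩⟩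
    exact hWind hvW hxW (G.ne_of_adj hadj) hadj
  · refine mem_insert_of_mem (mem_powerset.mpr fun x hx => ?_)
    obtain ⟨hxW, hxN⟩ := mem_inter.mp hx
    have hxv : x ≠ v := fun h => hvW (h ▸ hxW)
    have hadj : G.Adj v x := by simpa [hxv] using hxN
    simp only [freeNeighbors, mem_filter, mem_inter, mem_neighborFinset, mem_sdiff]
    refine ⟨⟨hadj, hWA hxW⟩, fun s ⟨hsW, hsN⟩ => hWind hxW hsW ?_⟩
    rintro rfl
    exact hsN hxN

lemma union_mem_indepSubsets (htf : ∀ t ⊆ A, ¬ G.IsNClique 3 t) (hv : v ∈ A) {S X : Finset V}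
    (hS : S ∈ G.indepSubsets (A \ insert v (G.neighborFinset v)))
    (hX : X ∈ G.extensions A v S) :
    S ∪ X ∈ G.indepSubsets A := by
  obtain ⟨hSA, hSind⟩ := mem_indepSubsets.mp hS
  have hSN : ∀ s ∈ S, s ≠ v ∧ ¬ G.Adj v s := fun s hs => by
    simpa [not_or] using (mem_sdiff.mp (hSA hs)).2
  rw [mem_indepSubsets, coe_union, IsIndepSet, Set.pairwise_union]
  rcases mem_insert.mp hX with rfl | hX
  · refine ⟨union_subset (hSA.trans sdiff_subset) (singleton_subset_iff.mpr hv), hSind, by simp, ?_⟩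
    intro s hs x hx _
    rw [coe_singleton, Set.mem_singleton_iff] at hx
    subst hx
    exact ⟨fun h => (hSN s hs).2 h.symm, (hSN s hs).2⟩
  · have hXF := mem_powerset.mp hX
    have hXA : X ⊆ G.neighborFinset v ∩ A := hXF.trans (filter_subset _ _)
    refine ⟨union_subset (hSA.trans sdiff_subset) (hXA.trans inter_subset_right), hSind,
      (isIndepSet_neighborFinset_inter htf hv).mono (coe_subset.mpr hXA), ?_⟩
    intro s hs x hx _
    have hxs := (mem_filter.mp (hXF hx)).2 s hs
    exact ⟨fun h => hxs h.symm, hxs⟩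

lemma sum_indepSubsets_eq_sum_extensions {β : Type*} [AddCommMonoid β]
    (htf : ∀ t ⊆ A, ¬ G.IsNClique 3 t) (hv : v ∈ A) (f : Finset V → β) :
    ∑ W ∈ G.indepSubsets A, f W =
      ∑ S ∈ G.indepSubsets (A \ insert v (G.neighborFinset v)),
        ∑ X ∈ G.extensions A v S, f (S ∪ X) := by
  set N := insert v (G.neighborFinset v)
  rw [← sum_sigma _ (G.extensions A v) (fun p => f (p.1 ∪ p.2))]
  refine sum_nbij' (fun W => ⟨W \ N, W ∩ N⟩) (fun p => p.1 ∪ p.2) ?_ ?_ ?_ ?_ ?_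
  · intro W hW
    obtain ⟨hWA, hWind⟩ := mem_indepSubsets.mp hW
    refine mem_sigma.mpr ⟨mem_indepSubsets.mpr ⟨sdiff_subset_sdiff hWA subset_rfl, ?_⟩,
      inter_mem_extensions hW⟩
    exact hWind.mono (coe_subset.mpr sdiff_subset)
  · intro p hp
    exact union_mem_indepSubsets htf hv (mem_sigma.mp hp).1 (mem_sigma.mp hp).2
  · intro W _
    exact sdiff_union_inter W N
  · rintro ⟨S, X⟩ hp
    obtain ⟨hS, hX⟩ := mem_sigma.mp hp
    have hSN : Disjoint S N := disjoint_of_subset_left (mem_indepSubsets.mp hS).1 sdiff_disjoint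
    have hXN : X ⊆ N := subset_of_mem_extensions hX
    simp only [Sigma.mk.injEq, heq_eq_eq]
    constructor
    · rw [union_sdiff_distrib, sdiff_eq_self_of_disjoint hSN, sdiff_eq_empty_iff_subset.mpr hXN,
        union_empty]
    · rw [union_inter_distrib_right, disjoint_iff_inter_eq_empty.mp hSN, inter_eq_left.mpr hXN,
        empty_union]
  · intro W _
    rw [sdiff_union_inter]

lemma card_mul_le_sum_shearerWeight {D : ℝ} (hD : 1 ≤ D) (htf : ∀ t ⊆ A, ¬ G.IsNClique 3 t)
    (hv : v ∈ A) :
    #(G.indepSubsets A) * (Real.log D / 8) ≤ ∑ W ∈ G.indepSubsets A, G.shearerWeight D v W := by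
  rw [← nsmul_eq_mul, ← sum_const, sum_indepSubsets_eq_sum_extensions htf hv,
    sum_indepSubsets_eq_sum_extensions htf hv]
  refine sum_le_sum fun S hS => ?_
  have hSN : Disjoint S (insert v (G.neighborFinset v)) :=
    disjoint_of_subset_left (mem_indepSubsets.mp hS).1 sdiff_disjoint
  rw [sum_const, nsmul_eq_mul, sum_congr rfl fun X _ => shearerWeight_union_of_disjoint G hSN X]
  exact le_sum_shearerWeight G hD ((filter_subset _ _).trans inter_subset_left)

end

theorem exists_isIndepSet_card_mul_log_le (A : Finset V) {D : ℝ} (hD : 1 ≤ D)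
    (htf : ∀ t ⊆ A, ¬ G.IsNClique 3 t) (hdeg : ∀ v ∈ A, #(G.neighborFinset v ∩ A) ≤ D) :
    ∃ W ⊆ A, G.IsIndepSet W ∧ #A * Real.log D ≤ 16 * D * #W := by
  have hsum : ∑ _W ∈ G.indepSubsets A, #A * (Real.log D / 8) ≤
      ∑ W ∈ G.indepSubsets A, 2 * D * #W :=
    calc ∑ _W ∈ G.indepSubsets A, #A * (Real.log D / 8)
        = ∑ _v ∈ A, #(G.indepSubsets A) * (Real.log D / 8) := by
          simp only [sum_const, nsmul_eq_mul]; ring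
      _ ≤ ∑ v ∈ A, ∑ W ∈ G.indepSubsets A, G.shearerWeight D v W :=
          sum_le_sum fun v hv => card_mul_le_sum_shearerWeight hD htf hv
      _ = ∑ W ∈ G.indepSubsets A, ∑ v ∈ A, G.shearerWeight D v W := sum_comm
      _ ≤ ∑ W ∈ G.indepSubsets A, 2 * D * #W :=
          sum_le_sum fun W hW => G.sum_shearerWeight_le (mem_indepSubsets.mp hW).1 hdeg
  obtain ⟨W, hW, hle⟩ := exists_le_of_sum_le ⟨∅, by simp [mem_indepSubsets]⟩ hsum
  obtain ⟨hWA, hWind⟩ := mem_indepSubsets.mp hW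
  exact ⟨W, hWA, hWind, by linarith⟩

lemma exists_subset_not_isNClique_three (S : Finset V) :
    ∃ S' ⊆ S, (∀ t ⊆ S', ¬ G.IsNClique 3 t) ∧ #S ≤ #S' + #{t ∈ G.cliqueFinset 3 | t ⊆ S} := by
  set T := {t ∈ G.cliqueFinset 3 | t ⊆ S}
  have hT : ∀ t ∈ T, ∃ x, x ∈ t := fun t ht => card_pos.mp <| by
    rw [(mem_cliqueFinset_iff.mp (mem_filter.mp ht).1).card_eq]; norm_num
  choose pick hpick using hT
  refine ⟨S \ T.attach.image (fun t => pick t.1 t.2), sdiff_subset, fun t ht hclique => ?_, ?_⟩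
  · have htT : t ∈ T := mem_filter.mpr ⟨mem_cliqueFinset_iff.mpr hclique, ht.trans sdiff_subset⟩
    exact (mem_sdiff.mp (ht (hpick t htT))).2 (mem_image_of_mem _ (mem_attach T ⟨t, htT⟩))
  · exact card_le_card_sdiff_add_card.trans
      (Nat.add_le_add_left (card_image_le.trans card_attach.le) _)

lemma exists_subset_card_neighborFinset_inter_le (S : Finset V) {D : ℝ} (hD : 0 < D) :
    ∃ A ⊆ S, (∀ v ∈ A, #(G.neighborFinset v ∩ A) ≤ D) ∧
      #S - (∑ v ∈ S, #(G.neighborFinset v ∩ S) : ℝ) / D ≤ #A := by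
  set A := {v ∈ S | (#(G.neighborFinset v ∩ S) : ℝ) ≤ D}
  set B := {v ∈ S | ¬ (#(G.neighborFinset v ∩ S) : ℝ) ≤ D}
  refine ⟨A, filter_subset _ _, fun v hv => le_trans ?_ (mem_filter.mp hv).2, ?_⟩
  · exact_mod_cast card_le_card (inter_subset_inter_left (filter_subset _ _))
  have hsplit : (#A : ℝ) + #B = #S := by exact_mod_cast card_filter_add_card_filter_not _
  have hB : #B * D ≤ ∑ v ∈ S, (#(G.neighborFinset v ∩ S) : ℝ) :=
    calc #B * D = ∑ _v ∈ B, D := by rw [sum_const, nsmul_eq_mul]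
      _ ≤ ∑ v ∈ B, (#(G.neighborFinset v ∩ S) : ℝ) :=
          sum_le_sum fun v hv => (not_le.mp (mem_filter.mp hv).2).le
      _ ≤ _ := sum_le_sum_of_subset_of_nonneg (filter_subset _ _) fun _ _ _ => by positivity
  have : (#B : ℝ) ≤ (∑ v ∈ S, #(G.neighborFinset v ∩ S) : ℝ) / D := by rwa [le_div_iff₀ hD]
  linarith

theorem exists_subset_not_isNClique_three_card_neighborFinset_inter_le (S : Finset V) {D : ℝ}
    (hD : 0 < D) :
    ∃ A ⊆ S, (∀ t ⊆ A, ¬ G.IsNClique 3 t) ∧ (∀ v ∈ A, #(G.neighborFinset v ∩ A) ≤ D) ∧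
      #S - #{t ∈ G.cliqueFinset 3 | t ⊆ S} - (∑ v ∈ S, #(G.neighborFinset v ∩ S) : ℝ) / D
        ≤ #A := by
  obtain ⟨S', hS'S, htf, hS'⟩ := G.exists_subset_not_isNClique_three S
  obtain ⟨A, hAS', hdeg, hA⟩ := G.exists_subset_card_neighborFinset_inter_le S' hD
  refine ⟨A, hAS'.trans hS'S, fun t ht => htf t (ht.trans hAS'), hdeg, ?_⟩
  have hmono : ∑ v ∈ S', (#(G.neighborFinset v ∩ S') : ℝ) ≤
      ∑ v ∈ S, (#(G.neighborFinset v ∩ S) : ℝ) :=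
    (sum_le_sum fun v _ => by exact_mod_cast card_le_card (inter_subset_inter_left hS'S)).trans
      (sum_le_sum_of_subset_of_nonneg hS'S fun _ _ _ => by positivity)
  have hS'r : (#S : ℝ) ≤ #S' + #{t ∈ G.cliqueFinset 3 | t ⊆ S} := by exact_mod_cast hS'
  linarith [div_le_div_of_nonneg_right hmono hD.le]

lemma sum_card_neighborFinset_inter_eq_card_filter (S : Finset V) :
    ∑ v ∈ S, #(G.neighborFinset v ∩ S) =
      #{z ∈ univ.sigma fun v => G.neighborFinset v | ({z.1, z.2} : Finset V) ⊆ S} := by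
  rw [card_filter, sum_sigma]
  simp only [insert_subset_iff, singleton_subset_iff, ite_and, sum_ite_irrel, sum_const_zero,
    sum_boole, Nat.cast_id, ← sum_filter, filter_mem_eq_inter, inter_univ, inter_comm]

theorem exists_isIndepSet_of_binomialWeight {p D : ℝ} (hp0 : 0 ≤ p) (hp1 : p ≤ 1) (hD : 1 ≤ D) :
    ∃ W : Finset V, G.IsIndepSet W ∧
      (p * Fintype.card V - p ^ 3 * #(G.cliqueFinset 3) - p ^ 2 * (∑ v, (G.degree v : ℝ)) / D)
        * Real.log D ≤ 16 * D * #W := by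
  set Φ : Finset V → ℝ := fun S => #S - #{t ∈ G.cliqueFinset 3 | t ⊆ S} -
    (∑ v ∈ S, #(G.neighborFinset v ∩ S) : ℝ) / D
  have hE : ∑ S, binomialWeight p S * Φ S =
      p * Fintype.card V - p ^ 3 * #(G.cliqueFinset 3) - p ^ 2 * (∑ v, (G.degree v : ℝ)) / D := by
    have hcard : ∑ S : Finset V, binomialWeight p S * #S = p * Fintype.card V := by
      have h := sum_binomialWeight_mul_card_filter p univ (fun x : V => {x})
      simp only [singleton_subset_iff, filter_mem_eq_inter, univ_inter] at h
      simp [h, mul_comm]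
    have htri : ∑ S, binomialWeight p S * #{t ∈ G.cliqueFinset 3 | t ⊆ S} =
        p ^ 3 * #(G.cliqueFinset 3) := by
      rw [sum_binomialWeight_mul_card_filter p (G.cliqueFinset 3) (fun t => t),
        sum_congr rfl fun t ht => by rw [(mem_cliqueFinset_iff.mp ht).card_eq]]
      simp [mul_comm]
    have hedge : ∑ S, binomialWeight p S * (∑ v ∈ S, #(G.neighborFinset v ∩ S) : ℝ) =
        p ^ 2 * ∑ v, (G.degree v : ℝ) := by
      simp only [← Nat.cast_sum, sum_card_neighborFinset_inter_eq_card_filter]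
      rw [sum_binomialWeight_mul_card_filter,
        sum_congr rfl fun z hz => by rw [card_pair (G.ne_of_adj (by simpa using hz))]]
      simp [card_sigma, mul_comm]
    simp only [Φ, mul_sub, mul_div_assoc', sum_sub_distrib, ← sum_div, hcard, htri, hedge]
  obtain ⟨S, hS⟩ := exists_sum_mul_le (binomialWeight_nonneg hp0 hp1) (sum_binomialWeight p) Φ
  obtain ⟨A, -, htf, hdeg, hA⟩ :=
    G.exists_subset_not_isNClique_three_card_neighborFinset_inter_le S (by linarith : 0 < D)
  obtain ⟨W, -, hW, hWcard⟩ := G.exists_isIndepSet_card_mul_log_le A hD htf hdeg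
  refine ⟨W, hW, ?_⟩
  rw [← hE]
  exact (mul_le_mul_of_nonneg_right (hS.trans hA) (Real.log_nonneg hD)).trans hWcard

theorem exists_isIndepSet_of_card_cliqueFinset_le {d : ℕ} (hd : 0 < d) {δ : ℝ} (hδ0 : 0 < δ)
    (hδ2 : δ ≤ 2) (hmax : G.maxDegree ≤ d)
    (htri : (#(G.cliqueFinset 3) : ℝ) ≤ Fintype.card V * (d : ℝ) ^ (2 - δ)) :
    ∃ W : Finset V, G.IsIndepSet W ∧ δ / 256 * (Fintype.card V / d) * Real.log d ≤ #W := by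
  have hd1 : (1 : ℝ) ≤ d := by exact_mod_cast hd
  have hd0 : (0 : ℝ) < d := by positivity
  set D := (d : ℝ) ^ (δ / 2) with hD
  have hD1 : 1 ≤ D := Real.one_le_rpow hd1 (by positivity)
  have hDd : D ≤ d := by
    simpa using Real.rpow_le_rpow_of_exponent_le hd1 (by linarith : δ / 2 ≤ 1)
  have hDsq : D ^ 2 * (d : ℝ) ^ (2 - δ) = d ^ 2 := by
    rw [hD, ← Real.rpow_natCast, ← Real.rpow_mul hd0.le, ← Real.rpow_add hd0]
    norm_num
  set p := D / (4 * d) with hp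
  have hp0 : 0 ≤ p := by positivity
  have hp1 : p ≤ 1 := by rw [hp, div_le_one (by positivity)]; linarith
  obtain ⟨W, hW, hWcard⟩ := G.exists_isIndepSet_of_binomialWeight hp0 hp1 hD1
  refine ⟨W, hW, ?_⟩
  have hdeg : ∑ v, (G.degree v : ℝ) ≤ Fintype.card V * d := by
    have := sum_le_sum fun v (_ : v ∈ univ) => (G.degree_le_maxDegree v).trans hmax
    simp only [sum_const, card_univ, smul_eq_mul] at this
    exact_mod_cast this
  set n : ℝ := (Fintype.card V : ℝ)
  have htri' : p ^ 3 * #(G.cliqueFinset 3) ≤ p * n / 16 := by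
    have hp2 : p ^ 2 * (d : ℝ) ^ (2 - δ) = 1 / 16 := by
      rw [hp]; field_simp; linear_combination 16 * hDsq
    calc p ^ 3 * #(G.cliqueFinset 3) ≤ p ^ 3 * (n * (d : ℝ) ^ (2 - δ)) := by gcongr
      _ = p * n / 16 := by linear_combination (p * n) * hp2
  have hdeg' : p ^ 2 * (∑ v, (G.degree v : ℝ)) / D ≤ p * n / 4 :=
    calc p ^ 2 * (∑ v, (G.degree v : ℝ)) / D ≤ p ^ 2 * (n * d) / D := by gcongr
      _ = p * n / 4 := by rw [hp]; field_simp
  have hlogD : Real.log D = δ / 2 * Real.log d := Real.log_rpow hd0 _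
  have key : D * (δ / 256 * (n / d) * Real.log d) ≤ D * #W :=
    calc D * (δ / 256 * (n / d) * Real.log d) = p * n / 2 * Real.log D / 16 := by
          rw [hlogD, hp]; field_simp; ring
      _ ≤ (p * n - p ^ 3 * #(G.cliqueFinset 3) - p ^ 2 * (∑ v, (G.degree v : ℝ)) / D)
            * Real.log D / 16 := by
          gcongr
          · exact Real.log_nonneg hD1
          · linarith [mul_nonneg hp0 (Nat.cast_nonneg (Fintype.card V))]
      _ ≤ D * #W := by linarith
  exact le_of_mul_le_mul_left key (by positivity)

end SimpleGraph

theorem indep_set_of_few_triangles_general (ε : ℝ) (hε0 : 0 < ε) :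
    ∃ c : ℝ, 0 < c ∧ ∃ d₀ : ℕ,
      ∀ (d : ℕ), d₀ < d →
      ∀ (V : Type) [Fintype V] (G : SimpleGraph V),
        G.maxDegree ≤ d →
        ((G.cliqueFinset 3).card : ℝ) ≤ (Fintype.card V : ℝ) * (d : ℝ) ^ ((2 : ℝ) - ε) →
        ∃ S : Finset V,
          (∀ u ∈ S, ∀ v ∈ S, u ≠ v → ¬ G.Adj u v) ∧
          c * ((Fintype.card V : ℝ) / (d : ℝ)) * Real.log d ≤ (S.card : ℝ) := by
  refine ⟨min ε 2 / 256, by positivity, 0, fun d hd V _ G hmax htri => ?_⟩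
  refine G.exists_isIndepSet_of_card_cliqueFinset_le hd (lt_min hε0 two_pos) (min_le_right _ _)
    hmax (htri.trans ?_)
  gcongr
  · exact_mod_cast hd
  · exact min_le_left _ _

/-- For every constant `ε ∈ (0,3)` there exist `c > 0` and `d₀` such that for `d > d₀`,
every `n`-vertex graph with maximum degree at most `d` and at most `n·d^(2-ε)` triangles
has an independent set of size at least `c·(n/d)·log d`. -/
theorem indep_set_of_few_triangles (ε : ℝ) (hε0 : 0 < ε) (hε3 : ε < 3) :
    ∃ c : ℝ, 0 < c ∧ ∃ d₀ : ℕ,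
      ∀ (d : ℕ), d₀ < d →
      ∀ (V : Type) [Fintype V] (G : SimpleGraph V),
        G.maxDegree ≤ d →
        ((G.cliqueFinset 3).card : ℝ) ≤ (Fintype.card V : ℝ) * (d : ℝ) ^ ((2 : ℝ) - ε) →
        ∃ S : Finset V,
          (∀ u ∈ S, ∀ v ∈ S, u ≠ v → ¬ G.Adj u v) ∧
          c * ((Fintype.card V : ℝ) / (d : ℝ)) * Real.log d ≤ (S.card : ℝ) :=
  indep_set_of_few_triangles_general ε hε0
end

section
/- Every n-vertex d-regular simple graph (with d ≥ 1) contains a matching of size at least d·n/(2d+2), and in particular of size at least n/4. -/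
open Finset Function

attribute [local instance] Classical.propDecidable

/-!
By the Tutte–Berge formula, if deleting any vertex set `u` leaves at most `|u| + k` odd
components, then `G` has a matching missing at most `k` vertices; this follows from Tutte's
theorem applied to `G` joined with `k` universal vertices. In a `d`-regular graph on `n` vertices,
a component of `G - u` with at most `d` vertices sends at least `d` edges into `u`, which receives
at most `d|u|` edges, so there are at most `|u|` such components; components with more than `d`
vertices number at most `n / (d + 1)`. Hence `k = ⌊n / (d + 1)⌋` works, and the matching has at
least `(n - n / (d + 1)) / 2 = dn / (2d + 2)` edges.
-/

theorem card_filter_lt_card_le_of_pairwise_disjoint {V ι : Type*} [Fintype V] [Fintype ι]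
    {c : ι → Finset V} (d : ℕ) (hdisj : Pairwise (Disjoint on c)) :
    #{i | d < #(c i)} ≤ Fintype.card V / (d + 1) := by
  rw [Nat.le_div_iff_mul_le d.succ_pos]
  calc #{i | d < #(c i)} * (d + 1) = ∑ _i ∈ {i | d < #(c i)}, (d + 1) := by
        rw [sum_const, smul_eq_mul]
    _ ≤ ∑ i ∈ {i | d < #(c i)}, #(c i) := sum_le_sum fun i hi => (mem_filter.1 hi).2
    _ ≤ ∑ i, #(c i) := sum_le_sum_of_subset (subset_univ _)
    _ = #(univ.biUnion c) := (card_biUnion fun i _ j _ hij => hdisj hij).symm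
    _ ≤ Fintype.card V := card_le_univ _

namespace SimpleGraph

variable {V W : Type*} {G : SimpleGraph V}

theorem Iso.ncard_oddComponents_eq {H : SimpleGraph W} (φ : G ≃g H) :
    G.oddComponents.ncard = H.oddComponents.ncard := by
  have hsupp (c : G.ConnectedComponent) :
      (φ.connectedComponentEquiv c).supp.ncard = c.supp.ncard :=
    (Set.ncard_congr' (ConnectedComponent.isoEquivSupp φ c)).symm
  refine Set.ncard_congr (fun c _ => φ.connectedComponentEquiv c) (fun c hc => ?_)
    (fun c c' _ _ h => φ.connectedComponentEquiv.injective h) (fun c hc => ?_)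
  · simpa only [oddComponents, Set.mem_ofPred_eq, hsupp] using hc
  · refine ⟨φ.connectedComponentEquiv.symm c, ?_, by simp⟩
    have := hsupp (φ.connectedComponentEquiv.symm c)
    rw [Equiv.apply_symm_apply] at this
    simpa only [oddComponents, Set.mem_ofPred_eq, ← this] using hc

theorem ncard_oddComponents_deleteVerts_add_ncard_mod_two [Finite V] (u : Set V) :
    (((⊤ : G.Subgraph).deleteVerts u).coe.oddComponents.ncard + u.ncard) % 2 =
      Nat.card V % 2 := by
  have hodd := odd_ncard_oddComponents (G := ((⊤ : G.Subgraph).deleteVerts u).coe)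
  have hcard : Nat.card ((⊤ : G.Subgraph).deleteVerts u).verts + u.ncard = Nat.card V := by
    rw [Subgraph.deleteVerts_verts, Subgraph.verts_top, Nat.card_coe_set_eq,
      ← Set.compl_eq_univ_sdiff, add_comm, Set.ncard_add_ncard_compl]
  simp only [Nat.odd_iff] at hodd
  omega

section Regular

variable [Fintype V]

theorem sum_card_filter_adj_eq_sum_degree (t : Finset V) :
    ∑ v, #{w ∈ t | G.Adj v w} = ∑ w ∈ t, G.degree w := by
  refine (sum_card_bipartiteAbove_eq_sum_card_bipartiteBelow G.Adj).trans
    (sum_congr rfl fun w _ => ?_)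
  simp [bipartiteBelow, ← card_neighborFinset_eq_degree, neighborFinset_eq_filter, G.adj_comm]

theorem IsRegularOfDegree.sub_card_le_card_filter_adj {d : ℕ} (hreg : G.IsRegularOfDegree d)
    {c t : Finset V} {v : V} (hv : v ∈ c) (hN : G.neighborFinset v ⊆ c ∪ t) :
    d + 1 - #c ≤ #{w ∈ t | G.Adj v w} := by
  have hsub : G.neighborFinset v ⊆ c.erase v ∪ {w ∈ t | G.Adj v w} := by
    intro w hw
    have hadj := (mem_neighborFinset G v w).1 hw
    rcases mem_union.1 (hN hw) with hc | ht
    · exact mem_union_left _ (mem_erase.2 ⟨hadj.ne.symm, hc⟩)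
    · exact mem_union_right _ (mem_filter.2 ⟨ht, hadj⟩)
  have := (card_le_card hsub).trans (card_union_le _ _)
  rw [card_neighborFinset_eq_degree, hreg v, card_erase_of_mem hv] at this
  have := card_pos.2 ⟨v, hv⟩
  omega

theorem IsRegularOfDegree.le_sum_card_filter_adj {d : ℕ} (hreg : G.IsRegularOfDegree d)
    {c t : Finset V} (hne : c.Nonempty) (hsmall : #c ≤ d)
    (hN : ∀ v ∈ c, G.neighborFinset v ⊆ c ∪ t) :
    d ≤ ∑ v ∈ c, #{w ∈ t | G.Adj v w} := by
  have hpos := hne.card_pos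
  calc d ≤ #c * (d + 1 - #c) := by
        obtain ⟨a, ha⟩ := Nat.exists_eq_add_of_le hsmall
        rw [ha, show #c + a + 1 - #c = a + 1 by omega]
        nlinarith
    _ = ∑ _v ∈ c, (d + 1 - #c) := by rw [sum_const, smul_eq_mul]
    _ ≤ ∑ v ∈ c, #{w ∈ t | G.Adj v w} :=
        sum_le_sum fun v hv => hreg.sub_card_le_card_filter_adj hv (hN v hv)

variable {ι : Type*} [Fintype ι] {c : ι → Finset V}

theorem IsRegularOfDegree.card_filter_card_le_le {d : ℕ} (hreg : G.IsRegularOfDegree d)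
    (hd : 1 ≤ d) (t : Finset V) (hdisj : Pairwise (Disjoint on c)) (hne : ∀ i, (c i).Nonempty)
    (hN : ∀ i, ∀ v ∈ c i, G.neighborFinset v ⊆ c i ∪ t) :
    #{i | #(c i) ≤ d} ≤ #t := by
  set E : Finset V → ℕ := fun s => ∑ v ∈ s, #{w ∈ t | G.Adj v w}
  have hE : ∑ i, E (c i) ≤ d * #t :=
    calc ∑ i, E (c i) = E (univ.biUnion c) :=
          (sum_biUnion fun i _ j _ hij => hdisj hij).symm
      _ ≤ ∑ v, #{w ∈ t | G.Adj v w} := sum_le_sum_of_subset (subset_univ _)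
      _ = d * #t := by
          rw [sum_card_filter_adj_eq_sum_degree, sum_congr rfl fun w _ => hreg w, sum_const,
            smul_eq_mul, mul_comm]
  have : d * #{i | #(c i) ≤ d} ≤ d * #t :=
    calc d * #{i | #(c i) ≤ d} = ∑ _i ∈ {i | #(c i) ≤ d}, d := by
          rw [sum_const, smul_eq_mul, mul_comm]
      _ ≤ ∑ i ∈ {i | #(c i) ≤ d}, E (c i) := sum_le_sum fun i hi =>
          hreg.le_sum_card_filter_adj (hne i) (mem_filter.1 hi).2 (hN i)
      _ ≤ ∑ i, E (c i) := sum_le_sum_of_subset (subset_univ _)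
      _ ≤ d * #t := hE
  exact Nat.le_of_mul_le_mul_left this hd

theorem IsRegularOfDegree.card_le_add_card_div {d : ℕ} (hreg : G.IsRegularOfDegree d)
    (hd : 1 ≤ d) (t : Finset V) (hdisj : Pairwise (Disjoint on c)) (hne : ∀ i, (c i).Nonempty)
    (hN : ∀ i, ∀ v ∈ c i, G.neighborFinset v ⊆ c i ∪ t) :
    Fintype.card ι ≤ #t + Fintype.card V / (d + 1) := by
  rw [← card_univ, ← card_filter_add_card_filter_not (fun i => #(c i) ≤ d)]
  simp only [not_le]
  exact add_le_add (hreg.card_filter_card_le_le hd t hdisj hne hN)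
    (card_filter_lt_card_le_of_pairwise_disjoint d hdisj)

theorem IsRegularOfDegree.ncard_oddComponents_deleteVerts_le {d : ℕ}
    (hreg : G.IsRegularOfDegree d) (hd : 1 ≤ d) (u : Set V) :
    ((⊤ : G.Subgraph).deleteVerts u).coe.oddComponents.ncard ≤
      u.ncard + Fintype.card V / (d + 1) := by
  set H := ((⊤ : G.Subgraph).deleteVerts u).coe
  have := Fintype.ofFinite H.ConnectedComponent
  let c : H.ConnectedComponent → Finset V := fun K => {v | v ∈ Subtype.val '' K.supp}
  have hdisj : Pairwise (Disjoint on c) := by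
    intro K K' hKK'
    refine Finset.disjoint_left.2 fun v hv hv' => hKK' ?_
    simp only [c, mem_filter, mem_univ, true_and] at hv hv'
    obtain ⟨x, hx, rfl⟩ := hv
    obtain ⟨x', hx', hxx'⟩ := hv'
    rw [Subtype.ext hxx'] at hx'
    exact ConnectedComponent.eq_of_common_vertex hx hx'
  have hne (K : H.ConnectedComponent) : (c K).Nonempty := by
    obtain ⟨x, hx⟩ := K.nonempty_supp
    exact ⟨x, mem_filter.2 ⟨mem_univ _, x, hx, rfl⟩⟩
  have hN (K : H.ConnectedComponent) :
      ∀ v ∈ c K, G.neighborFinset v ⊆ c K ∪ u.toFinset := by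
    intro v hv w hw
    rw [mem_union, Set.mem_toFinset, or_iff_not_imp_right]
    intro hwu
    simp only [c, mem_filter, mem_univ, true_and] at hv ⊢
    have hvu : v ∉ u := by
      obtain ⟨x, -, rfl⟩ := hv
      exact (Set.mem_sdiff _).1 x.2 |>.2
    refine ConnectedComponent.mem_coe_supp_of_adj hv (by simpa using hwu) ?_
    simpa [hvu, hwu] using (mem_neighborFinset G v w).1 hw
  calc H.oddComponents.ncard ≤ Fintype.card H.ConnectedComponent := by
        rw [← Nat.card_eq_fintype_card, ← Set.ncard_univ]
        exact Set.ncard_le_ncard (Set.subset_univ _)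
    _ ≤ #u.toFinset + Fintype.card V / (d + 1) :=
        hreg.card_le_add_card_div hd u.toFinset hdisj hne hN
    _ = u.ncard + Fintype.card V / (d + 1) := by rw [Set.ncard_eq_toFinset_card']

end Regular

abbrev addUniversalVerts (G : SimpleGraph V) (W : Type*) : SimpleGraph (V ⊕ W) :=
  (G ⊕g (⊤ : SimpleGraph W)) ⊔ completeBipartiteGraph V W

noncomputable def deleteVertsAddUniversalVertsIso (u : Set (V ⊕ W))
    (hu : Set.range Sum.inr ⊆ u) :
    ((⊤ : G.Subgraph).deleteVerts (Sum.inl ⁻¹' u)).coe ≃g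
      ((⊤ : (G.addUniversalVerts W).Subgraph).deleteVerts u).coe where
  toEquiv := Equiv.ofBijective (fun x => ⟨.inl x.1, by simpa using x.2⟩) <| by
    refine ⟨fun x y h => Subtype.ext (Sum.inl_injective (congrArg Subtype.val h)), ?_⟩
    rintro ⟨a | w, hx⟩
    · exact ⟨⟨a, by simpa using hx⟩, rfl⟩
    · exact absurd (hu ⟨w, rfl⟩) (by simpa using hx)
  map_rel_iff' := by simp [Equiv.ofBijective]

theorem not_isTutteViolator_addUniversalVerts [Finite V] [Fintype W]
    (heven : Even (Nat.card V + Fintype.card W))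
    (h : ∀ u : Set V, ((⊤ : G.Subgraph).deleteVerts u).coe.oddComponents.ncard ≤
      u.ncard + Fintype.card W) (u : Set (V ⊕ W)) :
    ¬(G.addUniversalVerts W).IsTutteViolator u := by
  rw [IsTutteViolator, not_lt]
  by_cases hu : Set.range Sum.inr ⊆ u
  · have hsplit : u = Sum.inl '' (Sum.inl ⁻¹' u) ∪ Set.range Sum.inr := by
      ext (a | w) <;> simp [hu ⟨_, rfl⟩]
    rw [← (deleteVertsAddUniversalVertsIso u hu).ncard_oddComponents_eq]
    refine (h _).trans (le_of_eq ?_)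
    conv_rhs => rw [hsplit]
    rw [Set.ncard_union_eq (by simp [Set.disjoint_left]),
      Set.ncard_image_of_injective _ Sum.inl_injective,
      Set.ncard_range_of_injective Sum.inr_injective, Nat.card_eq_fintype_card]
  · obtain ⟨w, hw⟩ : ∃ w, Sum.inr w ∉ u := by simpa [Set.range_subset_iff] using hu
    have hpar := ncard_oddComponents_deleteVerts_add_ncard_mod_two
      (G := G.addUniversalVerts W) u
    rw [Nat.card_sum, Nat.card_eq_fintype_card (α := W)] at hpar
    set H := ((⊤ : (G.addUniversalVerts W).Subgraph).deleteVerts u).coe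
    have hconn : H.Preconnected := by
      have hub (x : ((⊤ : (G.addUniversalVerts W).Subgraph).deleteVerts u).verts) :
          H.Reachable x ⟨.inr w, by simpa using hw⟩ := by
        by_cases hx : x.1 = .inr w
        · rw [show x = ⟨.inr w, by simpa using hw⟩ from Subtype.ext hx]
        refine Adj.reachable ?_
        obtain ⟨a | w', hx'⟩ := x <;>
          simp only [Subgraph.deleteVerts_verts, Subgraph.verts_top, Set.mem_sdiff] at hx' <;>
          simp_all [H]
      exact fun x y => (hub x).trans (hub y).symm
    have hle : H.oddComponents.ncard ≤ 1 :=
      have := hconn.subsingleton_connectedComponent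
      Set.ncard_le_one_of_subsingleton _
    have := Nat.even_iff.1 heven
    omega

theorem exists_matching_of_isPerfectMatching_addUniversalVerts [Fintype V] [Fintype W]
    {M' : (G.addUniversalVerts W).Subgraph} (hM' : M'.IsPerfectMatching) :
    ∃ M : Finset (Sym2 V), (M : Set (Sym2 V)) ⊆ G.edgeSet ∧
      (∀ e ∈ M, ∀ f ∈ M, e ≠ f → ∀ v : V, v ∈ e → v ∉ f) ∧
      Fintype.card V ≤ 2 * #M + Fintype.card W := by
  set M : Finset (Sym2 V) := {e | e.map Sum.inl ∈ M'.edgeSet}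
  have hmem {a b : V} : s(a, b) ∈ M ↔ M'.Adj (.inl a) (.inl b) := by simp [M]
  refine ⟨M, fun e he => ?_, fun e he f hf hne v hve hvf => ?_, ?_⟩
  · induction e with
    | h a b => simpa using M'.adj_sub (hmem.1 he)
  · obtain ⟨a, rfl⟩ := Sym2.mem_iff_exists.1 hve
    obtain ⟨b, rfl⟩ := Sym2.mem_iff_exists.1 hvf
    exact hne (by rw [Sum.inl_injective (hM'.1.eq_of_adj_left (hmem.1 he) (hmem.1 hf))])
  · set A : Finset V := {v | ∃ w, M'.Adj (.inl v) (.inr w)}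
    have hA : #A ≤ Fintype.card W :=
      card_le_card_of_forall_subsingleton (fun v w => M'.Adj (.inl v) (.inr w))
        (fun v hv => by simpa [A] using hv)
        (fun w _ a ha b hb => Sum.inl_injective (hM'.1.eq_of_adj_right ha.2 hb.2))
    have hC : #(M.biUnion Sym2.toFinset) ≤ 2 * #M :=
      calc #(M.biUnion Sym2.toFinset) ≤ ∑ e ∈ M, #e.toFinset := card_biUnion_le
        _ ≤ ∑ _e ∈ M, 2 := sum_le_sum fun e _ => by
            rw [Sym2.card_toFinset]
            split_ifs <;> norm_num
        _ = 2 * #M := by rw [sum_const, smul_eq_mul, mul_comm]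
    have hcover : (univ : Finset V) ⊆ A ∪ M.biUnion Sym2.toFinset := by
      intro v _
      obtain ⟨y, hy, -⟩ := Subgraph.isPerfectMatching_iff.1 hM' (.inl v)
      rcases y with b | w
      · exact mem_union_right _ (mem_biUnion.2 ⟨s(v, b), hmem.2 hy, by simp⟩)
      · exact mem_union_left _ (by simpa [A] using ⟨w, hy⟩)
    have := (card_le_card hcover).trans (card_union_le _ _)
    rw [card_univ] at this
    omega

theorem exists_matching_of_ncard_oddComponents_le [Fintype V] (k : ℕ)
    (h : ∀ u : Set V,
      ((⊤ : G.Subgraph).deleteVerts u).coe.oddComponents.ncard ≤ u.ncard + k) :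
    ∃ M : Finset (Sym2 V), (M : Set (Sym2 V)) ⊆ G.edgeSet ∧
      (∀ e ∈ M, ∀ f ∈ M, e ≠ f → ∀ v : V, v ∈ e → v ∉ f) ∧
      Fintype.card V ≤ 2 * #M + k := by
  have hpar (u : Set V) := ncard_oddComponents_deleteVerts_add_ncard_mod_two (G := G) u
  simp only [Nat.card_eq_fintype_card] at hpar
  -- The deficiency `odd(G - u) - |u|` has the parity of `|V|`, so `k` can be lowered to match it.
  obtain ⟨k', hk', heven, h'⟩ : ∃ k' ≤ k, Even (Fintype.card V + k') ∧
      ∀ u : Set V, ((⊤ : G.Subgraph).deleteVerts u).coe.oddComponents.ncard ≤ u.ncard + k' := by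
    by_cases heven : Even (Fintype.card V + k)
    · exact ⟨k, le_rfl, heven, h⟩
    · rw [Nat.even_iff] at heven
      have h0 := h ∅
      have hpar0 := hpar ∅
      simp only [Set.ncard_empty] at h0 hpar0
      refine ⟨k - 1, Nat.sub_le _ _, by rw [Nat.even_iff]; omega, fun u => ?_⟩
      have := h u
      have := hpar u
      omega
  obtain ⟨M', hM'⟩ := tutte.2 (not_isTutteViolator_addUniversalVerts (G := G) (W := Fin k')
    (by simpa [Nat.card_eq_fintype_card] using heven) (by simpa using h'))
  obtain ⟨M, hMG, hMdisj, hMcard⟩ := exists_matching_of_isPerfectMatching_addUniversalVerts hM'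
  exact ⟨M, hMG, hMdisj, by rw [Fintype.card_fin] at hMcard; omega⟩

end SimpleGraph

/-- Every `n`-vertex `d`-regular simple graph (`d ≥ 1`) contains a matching of size at
least `d·n/(2d+2)`, and in particular of size at least `n/4`. -/
theorem matching_in_regular_graph (V : Type) [Fintype V] (G : SimpleGraph V) (d : ℕ)
    (hd : 1 ≤ d) (hreg : G.IsRegularOfDegree d) :
    ∃ M : Finset (Sym2 V),
      (↑M : Set (Sym2 V)) ⊆ G.edgeSet ∧
      (∀ e ∈ M, ∀ f ∈ M, e ≠ f → ∀ v : V, v ∈ e → v ∉ f) ∧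
      ((d : ℝ) * (Fintype.card V : ℝ)) / (2 * (d : ℝ) + 2) ≤ (M.card : ℝ) ∧
      (Fintype.card V : ℝ) / 4 ≤ (M.card : ℝ) := by
  set n := Fintype.card V
  obtain ⟨M, hMG, hMdisj, hMcard⟩ := G.exists_matching_of_ncard_oddComponents_le (n / (d + 1))
    (hreg.ncard_oddComponents_deleteVerts_le hd)
  have hdiv : n / (d + 1) * (d + 1) ≤ n := Nat.div_mul_le_self n (d + 1)
  have hkey : (d : ℝ) * n ≤ (2 * d + 2) * #M := by
    have : d * n ≤ (2 * d + 2) * #M := by nlinarith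
    exact_mod_cast this
  refine ⟨M, hMG, hMdisj, ?_, ?_⟩
  · rw [div_le_iff₀ (by positivity)]
    linarith
  · have hd' : (1 : ℝ) ≤ d := by exact_mod_cast hd
    rw [div_le_iff₀ (by norm_num)]
    nlinarith
end

section
/- Kővári–Sós–Turán: For every B ≥ 1 there is a constant C = C(B) such that every graph on m vertices containing no copy of the complete bipartite graph K_{B,B} as a subgraph has at most C·m^{2−1/B} edges. -/
/-!
In a `K_{B,B}`-free graph every `B`-set of vertices has fewer than `B` common neighbours, so
double counting pairs (vertex, `B`-set of its neighbours) gives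
`∑ᵥ (d(v) choose B) ≤ (B - 1) · (m choose B)`. Since `(d + 1 - B)^B / B! ≤ d choose B`, the power
mean inequality turns this into `(∑ᵥ (d(v) + 1 - B))^B ≤ (B - 1) m^(2B-1)`, and `∑ᵥ d(v) = 2e`
then bounds the number of edges `e` by `B · m^(2 - 1/B)`.
-/

open Finset

attribute [local instance] Classical.propDecidable

namespace SimpleGraph

variable {V : Type*} [Fintype V] [DecidableEq V] (G : SimpleGraph V) [DecidableRel G.Adj]

def HasBiclique (B : ℕ) : Prop :=
  ∃ A A' : Finset V, #A = B ∧ #A' = B ∧ Disjoint A A' ∧ ∀ a ∈ A, ∀ b ∈ A', G.Adj a b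

variable {G} {B : ℕ}

lemma card_filter_subset_neighborFinset_lt (hG : ¬ G.HasBiclique B) {S : Finset V}
    (hS : #S = B) : #{v | S ⊆ G.neighborFinset v} < B := by
  by_contra! hle
  obtain ⟨A, hAS, hA⟩ := exists_subset_card_eq hle
  have hadj : ∀ a ∈ A, ∀ b ∈ S, G.Adj a b := fun a ha b hb =>
    (G.mem_neighborFinset a b).1 ((mem_filter.1 (hAS ha)).2 hb)
  exact hG ⟨A, S, hA, hS,
    Finset.disjoint_left.2 fun a ha haS => G.irrefl (hadj a ha a haS), hadj⟩

lemma sum_choose_degree_le (hG : ¬ G.HasBiclique B) :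
    ∑ v, (G.degree v).choose B ≤ (B - 1) * (Fintype.card V).choose B := by
  let r : V → Finset V → Prop := fun v S => S ⊆ G.neighborFinset v
  calc ∑ v, (G.degree v).choose B
      = ∑ v, #((univ.powersetCard B).bipartiteAbove r v) := by
        refine sum_congr rfl fun v _ => ?_
        rw [← card_neighborFinset_eq_degree, ← card_powersetCard]
        congr 1
        ext S
        simp [r, and_comm]
    _ = ∑ S ∈ univ.powersetCard B, #(univ.bipartiteBelow r S) :=
        sum_card_bipartiteAbove_eq_sum_card_bipartiteBelow r
    _ ≤ #(univ.powersetCard B) • (B - 1) := by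
        refine sum_le_card_nsmul _ _ _ fun S hS => Nat.le_sub_one_of_lt ?_
        simpa [bipartiteBelow] using
          card_filter_subset_neighborFinset_lt hG (mem_powersetCard.1 hS).2
    _ = (B - 1) * (Fintype.card V).choose B := by
        rw [card_powersetCard, card_univ, smul_eq_mul, mul_comm]

lemma sum_pow_degree_add_one_sub_le (hG : ¬ G.HasBiclique B) :
    ∑ v, (G.degree v + 1 - B) ^ B ≤ (B - 1) * Fintype.card V ^ B := by
  calc ∑ v, (G.degree v + 1 - B) ^ B
      ≤ ∑ v, (G.degree v).descFactorial B :=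
        sum_le_sum fun v _ => Nat.pow_sub_le_descFactorial _ _
    _ = B.factorial * ∑ v, (G.degree v).choose B := by
        simp_rw [Nat.descFactorial_eq_factorial_mul_choose, mul_sum]
    _ ≤ B.factorial * ((B - 1) * (Fintype.card V).choose B) := by
        gcongr
        exact sum_choose_degree_le hG
    _ = (B - 1) * (Fintype.card V).descFactorial B := by
        rw [Nat.descFactorial_eq_factorial_mul_choose, mul_left_comm]
    _ ≤ (B - 1) * Fintype.card V ^ B := by
        gcongr
        exact Nat.descFactorial_le_pow _ _

lemma pow_sum_degree_add_one_sub_le (hG : ¬ G.HasBiclique B) (hB : 1 ≤ B) :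
    (∑ v, (G.degree v + 1 - B)) ^ B ≤ (B - 1) * Fintype.card V ^ (2 * B - 1) := by
  obtain ⟨n, rfl⟩ : ∃ n, B = n + 1 := ⟨B - 1, by omega⟩
  calc (∑ v, (G.degree v + 1 - (n + 1))) ^ (n + 1)
      ≤ Fintype.card V ^ n * ∑ v, (G.degree v + 1 - (n + 1)) ^ (n + 1) := by
        simpa using pow_sum_le_card_mul_sum_pow (s := univ) (fun _ _ => Nat.zero_le _) n
    _ ≤ Fintype.card V ^ n * ((n + 1 - 1) * Fintype.card V ^ (n + 1)) := by
        gcongr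
        exact sum_pow_degree_add_one_sub_le hG
    _ = (n + 1 - 1) * Fintype.card V ^ (2 * (n + 1) - 1) := by
        rw [show 2 * (n + 1) - 1 = n + (n + 1) by omega, pow_add]
        ring

omit [DecidableEq V] in
lemma two_mul_card_edgeFinset_le (B : ℕ) :
    2 * #G.edgeFinset ≤ ∑ v, (G.degree v + 1 - B) + (B - 1) * Fintype.card V := by
  rw [← sum_degrees_eq_twice_card_edges]
  calc ∑ v, G.degree v ≤ ∑ v, ((G.degree v + 1 - B) + (B - 1)) :=
        sum_le_sum fun v _ => by omega
    _ = ∑ v, (G.degree v + 1 - B) + (B - 1) * Fintype.card V := by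
        rw [sum_add_distrib, sum_const, card_univ, smul_eq_mul, mul_comm]

end SimpleGraph

lemma Real.rpow_two_sub_inv_pow {x : ℝ} (hx : 0 ≤ x) {n : ℕ} (hn : 1 ≤ n) :
    (x ^ (2 - 1 / n : ℝ)) ^ n = x ^ (2 * n - 1) := by
  have hn' : (n : ℝ) ≠ 0 := by positivity
  rw [← Real.rpow_natCast, ← Real.rpow_mul hx, ← Real.rpow_natCast x, Nat.cast_sub (by omega)]
  congr 1
  field_simp
  push_cast
  ring

lemma Real.le_mul_rpow_two_sub_inv_of_pow_le {x c M : ℝ} (hc : 0 ≤ c) (hM : 0 ≤ M) {n : ℕ}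
    (hn : 1 ≤ n) (h : x ^ n ≤ c ^ n * M ^ (2 * n - 1)) : x ≤ c * M ^ (2 - 1 / n : ℝ) := by
  rw [← Real.rpow_two_sub_inv_pow hM hn, ← mul_pow] at h
  exact le_of_pow_le_pow_left₀ (by omega) (by positivity) h

lemma Real.natCast_le_rpow_of_one_le (m : ℕ) {p : ℝ} (hp : 1 ≤ p) : (m : ℝ) ≤ (m : ℝ) ^ p := by
  rcases m.eq_zero_or_pos with rfl | hm
  · simp [Real.zero_rpow (by linarith : p ≠ 0)]
  · exact Real.self_le_rpow_of_one_le (by exact_mod_cast hm) hp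

/-- Kővári–Sós–Turán: for every `B ≥ 1` there is a constant `C = C(B)` such that every
graph on `m` vertices with no `K_{B,B}` subgraph has at most `C·m^(2-1/B)` edges. -/
theorem kovari_sos_turan (B : ℕ) (hB : 1 ≤ B) :
    ∃ C : ℝ, 0 < C ∧
      ∀ (V : Type) [Fintype V] (G : SimpleGraph V),
        (¬ ∃ (A A' : Finset V), A.card = B ∧ A'.card = B ∧ Disjoint A A' ∧
            ∀ a ∈ A, ∀ b ∈ A', G.Adj a b) →
        (G.edgeFinset.card : ℝ) ≤ C * (Fintype.card V : ℝ) ^ ((2 : ℝ) - 1 / (B : ℝ)) := by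
  refine ⟨B, by exact_mod_cast hB, fun V _ G hG => ?_⟩
  set m := Fintype.card V
  set S := ∑ v, (G.degree v + 1 - B)
  have hB_le : ((B - 1 : ℕ) : ℝ) ≤ (B : ℝ) ^ B := by
    exact_mod_cast (B.sub_le 1).trans (Nat.le_self_pow (by omega) B)
  have hS : (S : ℝ) ≤ B * (m : ℝ) ^ (2 - 1 / B : ℝ) := by
    refine Real.le_mul_rpow_two_sub_inv_of_pow_le (by positivity) (by positivity) hB ?_
    calc (S : ℝ) ^ B ≤ ((B - 1 : ℕ) : ℝ) * (m : ℝ) ^ (2 * B - 1) := by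
          exact_mod_cast G.pow_sum_degree_add_one_sub_le hG hB
      _ ≤ (B : ℝ) ^ B * (m : ℝ) ^ (2 * B - 1) := by gcongr
  have hm : (m : ℝ) ≤ (m : ℝ) ^ (2 - 1 / B : ℝ) := by
    refine Real.natCast_le_rpow_of_one_le m ?_
    have : 1 / (B : ℝ) ≤ 1 := by rw [div_le_one (by positivity)]; exact_mod_cast hB
    linarith
  have hE : (2 * #G.edgeFinset : ℝ) ≤ S + ((B - 1 : ℕ) : ℝ) * m := by
    exact_mod_cast G.two_mul_card_edgeFinset_le B
  have hB1 : ((B - 1 : ℕ) : ℝ) ≤ B := by exact_mod_cast B.sub_le 1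
  linarith [mul_le_mul hB1 hm (Nat.cast_nonneg m) (Nat.cast_nonneg B)]
end

section
/- With the setup of the contracted matching graph: if G is n-vertex, d-regular, and K_{B,B}-free, then the contracted graph G_M has at most C·n·d^{2−1/B} triangles, where C depends only on B. -/
open Finset

attribute [local instance] Classical.propDecidable

/-- Two matching edges are adjacent in the contracted graph iff some edge of `G` joins
an endpoint of one to an endpoint of the other. -/
def contractedAdj {V : Type} (G : SimpleGraph V) (e f : Sym2 V) : Prop :=
  e ≠ f ∧ ∃ x ∈ e, ∃ y ∈ f, G.Adj x y

/-!
For a matching edge `e`, let `W_e` be the set of endpoints of the `G_M`-neighbours of `e`. A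
triangle `(e, f, g)` of `G_M` is determined by `e` together with a `G`-edge `xy`, `x ∈ f`,
`y ∈ g`, and both `x` and `y` lie in `W_e`. Since `M` is a matching and `G` is `d`-regular,
`|W_e| ≤ 4d`, so by the Kővári–Sós–Turán bound `e(G[W]) = O(|W| ^ (2 - 1/B))` every `e` lies in
`O(d ^ (2 - 1/B))` triangles, and there are at most `n` matching edges.

The Kővári–Sós–Turán bound comes from double counting pairs `(v, A)` with `A` a `B`-set of
neighbours of `v` in `W`: each `B`-set has fewer than `2B` common neighbours, and
`x ^ B ≤ B ^ B (C(x, B) + 1)` together with the power mean inequality turns this into the bound on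
`(∑ deg) ^ B`.
-/

theorem Nat.descFactorial_mul_pow_le_pow_mul_descFactorial {a b : ℕ} (hab : a ≤ b) (k : ℕ) :
    a.descFactorial k * b ^ k ≤ a ^ k * b.descFactorial k := by
  induction k with
  | zero => simp
  | succ k ih =>
    have hstep : (a - k) * b ≤ a * (b - k) := by
      rw [Nat.sub_mul, Nat.mul_sub, Nat.mul_comm a k]
      exact Nat.sub_le_sub_left (Nat.mul_le_mul_left k hab) _
    calc a.descFactorial (k + 1) * b ^ (k + 1)
        = ((a - k) * b) * (a.descFactorial k * b ^ k) := by
          rw [Nat.descFactorial_succ, pow_succ]; ring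
      _ ≤ (a * (b - k)) * (a ^ k * b.descFactorial k) := Nat.mul_le_mul hstep ih
      _ = a ^ (k + 1) * b.descFactorial (k + 1) := by
          rw [Nat.descFactorial_succ, pow_succ]; ring

theorem Nat.pow_le_pow_mul_choose_add_one (x B : ℕ) : x ^ B ≤ B ^ B * (x.choose B + 1) := by
  rcases lt_or_ge x B with hxB | hBx
  · calc x ^ B ≤ B ^ B := Nat.pow_le_pow_left hxB.le B
      _ ≤ B ^ B * (x.choose B + 1) := Nat.le_mul_of_pos_right _ (Nat.succ_pos _)
  · have h := Nat.descFactorial_mul_pow_le_pow_mul_descFactorial hBx B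
    rw [Nat.descFactorial_self, Nat.descFactorial_eq_factorial_mul_choose, Nat.mul_left_comm]
      at h
    calc x ^ B ≤ B ^ B * x.choose B := Nat.le_of_mul_le_mul_left h (Nat.factorial_pos B)
      _ ≤ B ^ B * (x.choose B + 1) := Nat.mul_le_mul_left _ (Nat.le_succ _)

theorem le_rpow_mul_rpow_of_pow_le {P c x : ℝ} {B k : ℕ} (hP : 0 ≤ P) (hc : 0 ≤ c)
    (hx : 0 ≤ x) (hB : B ≠ 0) (h : P ^ B ≤ c * x ^ k) :
    P ≤ c ^ (B⁻¹ : ℝ) * x ^ ((k : ℝ) / B) := by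
  calc P = (P ^ B) ^ (B⁻¹ : ℝ) := (Real.pow_rpow_inv_natCast hP hB).symm
    _ ≤ (c * x ^ k) ^ (B⁻¹ : ℝ) := by gcongr
    _ = c ^ (B⁻¹ : ℝ) * x ^ ((k : ℝ) / B) := by
      rw [Real.mul_rpow hc (by positivity), div_eq_mul_inv, Real.rpow_natCast_mul hx]

namespace SimpleGraph

variable {V : Type*} (G : SimpleGraph V)

def IsBicliqueFree (B : ℕ) : Prop :=
  ¬ ∃ A A' : Finset V, #A = B ∧ #A' = B ∧ Disjoint A A' ∧ ∀ a ∈ A, ∀ b ∈ A', G.Adj a b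

variable {G} {B : ℕ}

theorem card_interedges_eq_sum (s t : Finset V) :
    #(G.interedges s t) = ∑ v ∈ s, #{u ∈ t | G.Adj v u} := by
  rw [interedges_def, card_filter, sum_product]
  simp only [card_filter]

namespace IsBicliqueFree

theorem pos (h : G.IsBicliqueFree B) : 0 < B := by
  rw [Nat.pos_iff_ne_zero]
  rintro rfl
  exact h ⟨∅, ∅, rfl, rfl, disjoint_empty_left _, by simp⟩

theorem card_commonNeighbors_le (h : G.IsBicliqueFree B) (W : Finset V) {A : Finset V}
    (hA : #A = B) : #{v ∈ W | ∀ a ∈ A, G.Adj v a} ≤ 2 * B - 1 := by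
  by_contra! hbig
  set N := {v ∈ W | ∀ a ∈ A, G.Adj v a}
  have hNA : B ≤ #(N \ A) := by have := le_card_sdiff A N; omega
  obtain ⟨A', hA'N, hA'⟩ := exists_subset_card_eq hNA
  refine h ⟨A', A, hA', hA, disjoint_of_subset_left hA'N sdiff_disjoint, fun v hv => ?_⟩
  exact (mem_filter.1 (sdiff_subset (hA'N hv))).2

theorem sum_choose_card_neighbors_le (h : G.IsBicliqueFree B) (W : Finset V) :
    ∑ v ∈ W, (#{u ∈ W | G.Adj v u}).choose B ≤ (2 * B - 1) * (#W).choose B := by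
  set r : V → Finset V → Prop := fun v A => ∀ a ∈ A, G.Adj v a
  have habove : ∀ v,
      (W.powersetCard B).bipartiteAbove r v = powersetCard B {u ∈ W | G.Adj v u} := by
    intro v
    ext A
    simp only [bipartiteAbove, r, mem_filter, mem_powersetCard, subset_iff]
    constructor
    · rintro ⟨⟨hAW, hAB⟩, hadj⟩; exact ⟨fun a ha => ⟨hAW ha, hadj a ha⟩, hAB⟩
    · rintro ⟨hAW, hAB⟩; exact ⟨⟨fun a ha => (hAW ha).1, hAB⟩, fun a ha => (hAW ha).2⟩
  calc ∑ v ∈ W, (#{u ∈ W | G.Adj v u}).choose B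
      = ∑ v ∈ W, #((W.powersetCard B).bipartiteAbove r v) := by
        simp only [habove, card_powersetCard]
    _ = ∑ A ∈ W.powersetCard B, #(W.bipartiteBelow r A) :=
        sum_card_bipartiteAbove_eq_sum_card_bipartiteBelow r
    _ ≤ ∑ _A ∈ W.powersetCard B, (2 * B - 1) :=
        sum_le_sum fun A hA => h.card_commonNeighbors_le W (mem_powersetCard.1 hA).2
    _ = (2 * B - 1) * (#W).choose B := by rw [sum_const, card_powersetCard, smul_eq_mul, mul_comm]

theorem sum_pow_card_neighbors_le (h : G.IsBicliqueFree B) (W : Finset V) :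
    ∑ v ∈ W, #{u ∈ W | G.Adj v u} ^ B ≤ 2 * B * B ^ B * #W ^ B := by
  have hB := h.pos
  calc ∑ v ∈ W, #{u ∈ W | G.Adj v u} ^ B
      ≤ ∑ v ∈ W, B ^ B * ((#{u ∈ W | G.Adj v u}).choose B + 1) :=
        sum_le_sum fun v _ => Nat.pow_le_pow_mul_choose_add_one _ B
    _ = B ^ B * (∑ v ∈ W, (#{u ∈ W | G.Adj v u}).choose B + #W) := by
        rw [← mul_sum, sum_add_distrib, sum_const, smul_eq_mul, mul_one]
    _ ≤ B ^ B * ((2 * B - 1) * #W ^ B + #W ^ B) := by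
        gcongr
        · exact (h.sum_choose_card_neighbors_le W).trans
            (Nat.mul_le_mul_left _ (Nat.choose_le_pow _ _))
        · exact Nat.le_self_pow hB.ne' _
    _ = 2 * B * B ^ B * #W ^ B := by
        rw [← Nat.succ_mul, Nat.succ_eq_add_one, Nat.sub_add_cancel (by omega)]; ring

theorem card_interedges_pow_le (h : G.IsBicliqueFree B) (W : Finset V) :
    #(G.interedges W W) ^ B ≤ 2 * B * B ^ B * #W ^ (2 * B - 1) := by
  obtain ⟨k, rfl⟩ : ∃ k, B = k + 1 := Nat.exists_eq_add_one.2 h.pos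
  calc #(G.interedges W W) ^ (k + 1)
      ≤ #W ^ k * ∑ v ∈ W, #{u ∈ W | G.Adj v u} ^ (k + 1) := by
        rw [card_interedges_eq_sum]; exact pow_sum_le_card_mul_sum_pow (by simp) k
    _ ≤ #W ^ k * (2 * (k + 1) * (k + 1) ^ (k + 1) * #W ^ (k + 1)) :=
        Nat.mul_le_mul_left _ (h.sum_pow_card_neighbors_le W)
    _ = 2 * (k + 1) * (k + 1) ^ (k + 1) * #W ^ (2 * (k + 1) - 1) := by
        rw [show 2 * (k + 1) - 1 = k + (k + 1) by omega, pow_add]; ring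

theorem card_interedges_le_rpow (h : G.IsBicliqueFree B) (W : Finset V) :
    (#(G.interedges W W) : ℝ) ≤
      (2 * B * B ^ B : ℝ) ^ (B⁻¹ : ℝ) * (#W : ℝ) ^ ((2 : ℝ) - 1 / B) := by
  have hB := h.pos
  have hexp : (((2 * B - 1 : ℕ) : ℝ) / B) = (2 : ℝ) - 1 / B := by
    rw [Nat.cast_sub (by omega)]; field_simp; push_cast; ring
  rw [← hexp]
  exact le_rpow_mul_rpow_of_pow_le (by positivity) (by positivity) (by positivity) hB.ne'
    (by exact_mod_cast h.card_interedges_pow_le W)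

end IsBicliqueFree

end SimpleGraph

section ContractedGraph

variable {V : Type}

noncomputable def contractedNeighborVerts (G : SimpleGraph V) (M : Finset (Sym2 V))
    (e : Sym2 V) : Finset V :=
  {f ∈ M | contractedAdj G e f}.biUnion Sym2.toFinset

noncomputable def contractedTriangles (G : SimpleGraph V) (M : Finset (Sym2 V)) :
    Finset ((Sym2 V × Sym2 V) × Sym2 V) :=
  ((M ×ˢ M) ×ˢ M).filter fun q =>
    contractedAdj G q.1.1 q.1.2 ∧ contractedAdj G q.1.2 q.2 ∧ contractedAdj G q.1.1 q.2

variable {G : SimpleGraph V} {M : Finset (Sym2 V)}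

theorem card_filter_exists_mem_le (hM : ∀ e ∈ M, ∀ f ∈ M, e ≠ f → ∀ x : V, x ∈ e → x ∉ f)
    (S : Finset V) : #{f ∈ M | ∃ y ∈ S, y ∈ f} ≤ #S := by
  refine card_le_card_of_forall_subsingleton (fun f y => y ∈ f) (fun f hf => ?_) ?_
  · exact (mem_filter.1 hf).2
  · rintro y - f ⟨hf, hyf⟩ g ⟨hg, hyg⟩
    by_contra hfg
    exact hM f (mem_filter.1 hf).1 g (mem_filter.1 hg).1 hfg y hyf hyg

theorem card_contractedTriangles_le_sum
    (hM : ∀ e ∈ M, ∀ f ∈ M, e ≠ f → ∀ x : V, x ∈ e → x ∉ f) :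
    #(contractedTriangles G M) ≤ ∑ e ∈ M,
      #(G.interedges (contractedNeighborVerts G M e) (contractedNeighborVerts G M e)) := by
  rw [← card_sigma]
  refine card_le_card_of_forall_subsingleton
    (fun q (p : Σ _ : Sym2 V, V × V) => p.1 = q.1.1 ∧ p.2.1 ∈ q.1.2 ∧ p.2.2 ∈ q.2) ?_ ?_
  · rintro ⟨⟨e, f⟩, g⟩ hq
    simp only [contractedTriangles, mem_filter, mem_product] at hq
    obtain ⟨⟨⟨he, hf⟩, hg⟩, hef, ⟨-, x, hx, y, hy, hxy⟩, heg⟩ := hq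
    have hmem : ∀ h ∈ M, contractedAdj G e h → ∀ z ∈ h, z ∈ contractedNeighborVerts G M e :=
      fun h hh heh z hz => mem_biUnion.2 ⟨h, mem_filter.2 ⟨hh, heh⟩, Sym2.mem_toFinset.2 hz⟩
    exact ⟨⟨e, x, y⟩, mem_sigma.2 ⟨he, G.mk_mem_interedges_iff.2
      ⟨hmem f hf hef x hx, hmem g hg heg y hy, hxy⟩⟩, rfl, hx, hy⟩
  · rintro ⟨e, x, y⟩ - ⟨⟨e₁, f₁⟩, g₁⟩ ⟨hq₁, rfl, hx₁, hy₁⟩ ⟨⟨e₂, f₂⟩, g₂⟩ ⟨hq₂, he, hx₂, hy₂⟩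
    simp only [contractedTriangles, mem_filter, mem_product] at hq₁ hq₂
    have hunique : ∀ z, ∀ h₁ ∈ M, ∀ h₂ ∈ M, z ∈ h₁ → z ∈ h₂ → h₁ = h₂ :=
      fun z h₁ hh₁ h₂ hh₂ hz₁ hz₂ => by_contra fun hne => hM h₁ hh₁ h₂ hh₂ hne z hz₁ hz₂
    simp only at he
    rw [he, hunique x f₁ hq₁.1.1.2 f₂ hq₂.1.1.2 hx₁ hx₂, hunique y g₁ hq₁.1.2 g₂ hq₂.1.2 hy₁ hy₂]

variable [Fintype V] {d : ℕ}

theorem card_filter_contractedAdj_le (hG : G.IsRegularOfDegree d)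
    (hM : ∀ e ∈ M, ∀ f ∈ M, e ≠ f → ∀ x : V, x ∈ e → x ∉ f) (e : Sym2 V) :
    #{f ∈ M | contractedAdj G e f} ≤ 2 * d := by
  set S := e.toFinset.biUnion fun x => G.neighborFinset x
  have hS : #S ≤ 2 * d := by
    refine (card_biUnion_le_card_mul _ _ d fun x _ => (hG x).le).trans ?_
    rw [Sym2.card_toFinset]
    split_ifs <;> omega
  refine le_trans (card_le_card fun f hf => ?_) ((card_filter_exists_mem_le hM S).trans hS)
  obtain ⟨hfM, -, x, hx, y, hy, hxy⟩ := mem_filter.1 hf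
  exact mem_filter.2 ⟨hfM, y, mem_biUnion.2 ⟨x, Sym2.mem_toFinset.2 hx, by simpa using hxy⟩, hy⟩

theorem card_contractedNeighborVerts_le (hG : G.IsRegularOfDegree d)
    (hM : ∀ e ∈ M, ∀ f ∈ M, e ≠ f → ∀ x : V, x ∈ e → x ∉ f) (e : Sym2 V) :
    #(contractedNeighborVerts G M e) ≤ 4 * d := by
  refine (card_biUnion_le_card_mul _ _ 2 fun f _ => ?_).trans ?_
  · rw [Sym2.card_toFinset]; split_ifs <;> omega
  · have := card_filter_contractedAdj_le hG hM e; omega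

theorem card_interedges_contractedNeighborVerts_le {B : ℕ} (hG : G.IsRegularOfDegree d)
    (hK : G.IsBicliqueFree B) (hM : ∀ e ∈ M, ∀ f ∈ M, e ≠ f → ∀ x : V, x ∈ e → x ∉ f)
    (e : Sym2 V) :
    (#(G.interedges (contractedNeighborVerts G M e) (contractedNeighborVerts G M e)) : ℝ) ≤
      (2 * B * B ^ B : ℝ) ^ (B⁻¹ : ℝ) * 4 ^ ((2 : ℝ) - 1 / B) * (d : ℝ) ^ ((2 : ℝ) - 1 / B) := by
  have hB : (1 : ℝ) ≤ B := mod_cast hK.pos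
  have hexp : 0 ≤ (2 : ℝ) - 1 / B := by
    rw [sub_nonneg, div_le_iff₀ (by linarith)]; linarith
  calc _ ≤ (2 * B * B ^ B : ℝ) ^ (B⁻¹ : ℝ) *
        (#(contractedNeighborVerts G M e) : ℝ) ^ ((2 : ℝ) - 1 / B) :=
        hK.card_interedges_le_rpow _
    _ ≤ (2 * B * B ^ B : ℝ) ^ (B⁻¹ : ℝ) * (4 * d : ℝ) ^ ((2 : ℝ) - 1 / B) := by
        gcongr; exact_mod_cast card_contractedNeighborVerts_le hG hM e
    _ = _ := by rw [Real.mul_rpow (by norm_num : (0 : ℝ) ≤ 4) d.cast_nonneg, ← mul_assoc]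

end ContractedGraph

theorem contracted_graph_few_triangles_general (B : ℕ) :
    ∃ C : ℝ, 0 < C ∧
      ∀ (V : Type) [Fintype V] (G : SimpleGraph V) (d : ℕ),
        G.IsRegularOfDegree d →
        (¬ ∃ (A A' : Finset V), A.card = B ∧ A'.card = B ∧ Disjoint A A' ∧
            ∀ a ∈ A, ∀ b ∈ A', G.Adj a b) →
        ∀ M : Finset (Sym2 V),
          (↑M : Set (Sym2 V)) ⊆ G.edgeSet →
          (∀ e ∈ M, ∀ f ∈ M, e ≠ f → ∀ x : V, x ∈ e → x ∉ f) →
          2 * M.card ≤ Fintype.card V →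
          ((((M ×ˢ M) ×ˢ M).filter (fun q =>
              contractedAdj G q.1.1 q.1.2 ∧ contractedAdj G q.1.2 q.2 ∧
                contractedAdj G q.1.1 q.2)).card : ℝ)
            ≤ C * (Fintype.card V : ℝ) * (d : ℝ) ^ ((2 : ℝ) - 1 / (B : ℝ)) := by
  set C : ℝ := (2 * B * B ^ B : ℝ) ^ (B⁻¹ : ℝ) * 4 ^ ((2 : ℝ) - 1 / B)
  have hC : 0 < C := by
    obtain rfl | hB := B.eq_zero_or_pos
    · norm_num [C] -- `0 ^ (0 : ℝ)⁻¹ = 0 ^ 0 = 1`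
    · positivity
  refine ⟨C, hC, fun V _ G d hG hK M _ hM hMcard => ?_⟩
  calc (#(contractedTriangles G M) : ℝ)
      ≤ ∑ e ∈ M, (#(G.interedges (contractedNeighborVerts G M e)
          (contractedNeighborVerts G M e)) : ℝ) := by
        exact_mod_cast card_contractedTriangles_le_sum hM
    _ ≤ ∑ _e ∈ M, C * (d : ℝ) ^ ((2 : ℝ) - 1 / B) :=
        sum_le_sum fun e _ => card_interedges_contractedNeighborVerts_le hG hK hM e
    _ ≤ Fintype.card V * (C * (d : ℝ) ^ ((2 : ℝ) - 1 / B)) := by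
        rw [sum_const, nsmul_eq_mul]; gcongr; exact_mod_cast (by omega : #M ≤ Fintype.card V)
    _ = C * Fintype.card V * (d : ℝ) ^ ((2 : ℝ) - 1 / B) := by ring

/-- If `G` is `n`-vertex, `d`-regular and `K_{B,B}`-free and `M` is a matching of size at
most `n/2`, then the contracted matching graph `G_M` has at most `C·n·d^(2-1/B)` triangles
(`C` depending only on `B`; triangles are counted as ordered triples, which only changes
the constant). -/
theorem contracted_graph_few_triangles (B : ℕ) (hB : 1 ≤ B) :
    ∃ C : ℝ, 0 < C ∧
      ∀ (V : Type) [Fintype V] (G : SimpleGraph V) (d : ℕ),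
        G.IsRegularOfDegree d →
        (¬ ∃ (A A' : Finset V), A.card = B ∧ A'.card = B ∧ Disjoint A A' ∧
            ∀ a ∈ A, ∀ b ∈ A', G.Adj a b) →
        ∀ M : Finset (Sym2 V),
          (↑M : Set (Sym2 V)) ⊆ G.edgeSet →
          (∀ e ∈ M, ∀ f ∈ M, e ≠ f → ∀ x : V, x ∈ e → x ∉ f) →
          2 * M.card ≤ Fintype.card V →
          ((((M ×ˢ M) ×ˢ M).filter (fun q =>
              contractedAdj G q.1.1 q.1.2 ∧ contractedAdj G q.1.2 q.2 ∧
                contractedAdj G q.1.1 q.2)).card : ℝ)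
            ≤ C * (Fintype.card V : ℝ) * (d : ℝ) ^ ((2 : ℝ) - 1 / (B : ℝ)) :=
  contracted_graph_few_triangles_general B
end
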